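/- Let A be a finite-dimensional k-algebra whose Jacobson radical satisfies rad^N(A) = 0, and suppose A is positively graded, A = ⊕_{i=0}^{N-1} A_i with A_0 semisimple. Define the trivial extension Ā = A ⊕ A* and assign to A*_i the degree N−1−i; set Ā_j = A_j ⊕ A*_{N-1-j}. Then Ā = ⊕_{j=0}^{N-1} Ā_j is a grading of the algebra Ā, i.e. Ā_i · Ā_j ⊆ Ā_{i+j} (with Ā_m = 0 for m ≥ N), where the bimodule action on A* is (a·f·b)(x) = f(bxa). -/
import Mathlib


open Module

section

variable {k A : Type*} [Field k] [Ring A] [Algebra k A]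

/-- The homogeneous component `A_i*` of the dual `A*`: functionals vanishing on all
homogeneous components `A_m` with `m ≠ i`. -/
def dualComp (𝒜 : ℕ → Submodule k A) (i : ℕ) : Set (Module.Dual k A) :=
  {f | ∀ m : ℕ, m ≠ i → ∀ x ∈ 𝒜 m, f x = 0}

/-- Multiplication on the trivial extension `Ā = A ⊕ A*`:
`(a, f)(b, g) = (ab, a·g + f·b)` with bimodule action `(a·f·b)(x) = f (b * x * a)`. -/
noncomputable def trivExtMul (p q : A × Module.Dual k A) : A × Module.Dual k A :=
  (p.1 * q.1,
    q.2 ∘ₗ LinearMap.mulRight k p.1 + p.2 ∘ₗ LinearMap.mulLeft k q.1)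

end

/-- Let `A = ⊕_{i=0}^{N-1} A_i` be a finite-dimensional positively graded
`k`-algebra with `A_0` semisimple and `rad^N A = 0` (here `A_m = 0` for `m ≥ N`).
On the trivial extension `Ā = A ⊕ A*` assign to `A_i*` the degree `N-1-i` and set
`Ā_j = A_j ⊕ A*_{N-1-j}`.  Then `Ā_i · Ā_j ⊆ Ā_{i+j}` (with `Ā_m = 0` for `m ≥ N`):
for homogeneous `(a, f)` of degree `i` and `(b, g)` of degree `j`, if `i + j < N` the
product is homogeneous of degree `i + j`, and if `i + j ≥ N` the product is zero. -/
theorem statement16 {k A : Type*} [Field k] [Ring A] [Algebra k A]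
    [FiniteDimensional k A]
    (N : ℕ) (hN : 0 < N)
    (𝒜 : ℕ → Submodule k A)
    (hmul : ∀ (p q : ℕ) (x y : A), x ∈ 𝒜 p → y ∈ 𝒜 q → x * y ∈ 𝒜 (p + q))
    (hbound : ∀ m, N ≤ m → 𝒜 m = ⊥)
    (hdecomp : DirectSum.IsInternal fun i => 𝒜 i)
    -- `A_0` is semisimple: every `A_0`-submodule of `A_0` has a complement in `A_0`.
    (hss : ∀ W : Submodule k A, W ≤ 𝒜 0 →
      (∀ x ∈ 𝒜 0, ∀ w ∈ W, x * w ∈ W) →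
      ∃ W' : Submodule k A, W' ≤ 𝒜 0 ∧ (∀ x ∈ 𝒜 0, ∀ w ∈ W', x * w ∈ W') ∧
        W ⊓ W' = ⊥ ∧ W ⊔ W' = 𝒜 0) :
    ∀ (i j : ℕ) (a b : A) (f g : Module.Dual k A),
      i < N → j < N →
      a ∈ 𝒜 i → b ∈ 𝒜 j →
      f ∈ dualComp 𝒜 (N - 1 - i) → g ∈ dualComp 𝒜 (N - 1 - j) →
      (i + j < N →
        (trivExtMul (a, f) (b, g)).1 ∈ 𝒜 (i + j) ∧
        (trivExtMul (a, f) (b, g)).2 ∈ dualComp 𝒜 (N - 1 - (i + j))) ∧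
      (N ≤ i + j → trivExtMul (a, f) (b, g) = 0) := by
  intro i j a b f g hi hj ha hb hf hg
  have htop : (⨆ m, 𝒜 m) = ⊤ := hdecomp.submodule_iSup_eq_top
  constructor
  · intro hij
    refine ⟨hmul i j a b ha hb, ?_⟩
    intro m hm x hx
    have h1 : g (x * a) = 0 := by
      by_cases hcase : m + i = N - 1 - j
      · omega
      · exact hg (m + i) hcase _ (hmul m i x a hx ha)
    have h2 : f (b * x) = 0 := by
      by_cases hcase : j + m = N - 1 - i
      · omega
      · exact hf (j + m) hcase _ (hmul j m b x hb hx)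
    simp [trivExtMul, h1, h2]
  · intro hij
    have hab : a * b = 0 := by
      have := hmul i j a b ha hb
      rw [hbound (i + j) hij] at this
      simpa using this
    have hFz : (g ∘ₗ LinearMap.mulRight k a + f ∘ₗ LinearMap.mulLeft k b) = 0 := by
      have hker : ∀ m, 𝒜 m ≤
          LinearMap.ker (g ∘ₗ LinearMap.mulRight k a + f ∘ₗ LinearMap.mulLeft k b) := by
        intro m x hx
        have h1 : g (x * a) = 0 := hg (m + i) (by omega) _ (hmul m i x a hx ha)
        have h2 : f (b * x) = 0 := hf (j + m) (by omega) _ (hmul j m b x hb hx)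
        simp [LinearMap.mem_ker, h1, h2]
      have hle : (⊤ : Submodule k A) ≤
          LinearMap.ker (g ∘ₗ LinearMap.mulRight k a + f ∘ₗ LinearMap.mulLeft k b) :=
        htop ▸ iSup_le hker
      ext x
      simpa using hle (Submodule.mem_top (x := x))
    simp only [trivExtMul, Prod.ext_iff]
    exact ⟨by simpa using hab, by simpa using hFz⟩
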